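/- arXiv:0804.3889 — 3 statements merged into one kernel-verified Lean document; each statement's English description precedes it below -/
import Mathlib

section
/- Let V be a finite-dimensional real vector space endowed with three linear endomorphisms J₁, J₂, J₃ satisfying J₁² = J₂² = J₃² = −id and J₁J₂ = J₃ = −J₂J₁. If β is an alternating 3-form on V such that β(Y, J_k V, U) + β(Y, V, J_k U) = 0 for every k ∈ {1,2,3} and all Y, U, V ∈ V, then β = 0. -/
/-- Let `V` be a finite-dimensional real vector space endowed with three
linear endomorphisms `J₁, J₂, J₃` satisfying `J₁² = J₂² = J₃² = −id` and
`J₁J₂ = J₃ = −J₂J₁`. If `β` is an alternating 3-form on `V` such that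
`β(Y, J_k V, U) + β(Y, V, J_k U) = 0` for every `k ∈ {1,2,3}` and all `Y, U, V ∈ V`,
then `β = 0`. -/
theorem stmt0 {V : Type*} [AddCommGroup V] [Module ℝ V] [FiniteDimensional ℝ V]
    (J₁ J₂ J₃ : V →ₗ[ℝ] V)
    (h1 : ∀ v, J₁ (J₁ v) = -v) (h2 : ∀ v, J₂ (J₂ v) = -v) (h3 : ∀ v, J₃ (J₃ v) = -v)
    (h12 : ∀ v, J₁ (J₂ v) = J₃ v) (h21 : ∀ v, J₂ (J₁ v) = -(J₃ v))
    (β : V [⋀^Fin 3]→ₗ[ℝ] ℝ)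
    (hβ : ∀ J ∈ ({J₁, J₂, J₃} : Set (V →ₗ[ℝ] V)), ∀ Y W U : V,
      β ![Y, J W, U] + β ![Y, W, J U] = 0) :
    β = 0 := by
  have hJ : ∀ Y W U : V, β ![Y, J₁ W, U] = -β ![Y, W, J₁ U] := by
    intro Y W U
    have := hβ J₁ (by simp) Y W U
    linarith
  -- negation in the third slot
  have hneg : ∀ a b c : V, β ![a, b, -c] = -β ![a, b, c] := by
    intro a b c
    have h := β.toMultilinearMap.map_update_neg ![a, b, c] 2 c
    have e1 : Function.update ![a, b, c] 2 (-c) = ![a, b, -c] := by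
      funext i; fin_cases i <;> simp [Function.update]
    have e2 : Function.update ![a, b, c] 2 c = ![a, b, c] := by
      funext i; fin_cases i <;> simp [Function.update]
    rw [e1, e2] at h
    exact h
  -- cyclic permutation
  have hcyc : ∀ a b c : V, β ![a, b, c] = β ![c, a, b] := by
    intro a b c
    have s1 : β (![c, a, b] ∘ Equiv.swap (0 : Fin 3) 1) = -β ![c, a, b] :=
      β.map_swap _ (by decide)
    have e1 : ![c, a, b] ∘ Equiv.swap (0 : Fin 3) 1 = ![a, c, b] := by
      funext i; fin_cases i <;> simp [Equiv.swap_apply_def]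
    have s2 : β (![a, c, b] ∘ Equiv.swap (1 : Fin 3) 2) = -β ![a, c, b] :=
      β.map_swap _ (by decide)
    have e2 : ![a, c, b] ∘ Equiv.swap (1 : Fin 3) 2 = ![a, b, c] := by
      funext i; fin_cases i <;> simp [Equiv.swap_apply_def]
    rw [e1] at s1
    rw [e2] at s2
    rw [s2, s1]; ring
  -- moving J₁ from slot 1 to slot 3 flips the sign
  have hJ1 : ∀ a b c : V, β ![J₁ a, b, c] = -β ![a, b, J₁ c] := by
    intro a b c
    calc β ![J₁ a, b, c] = β ![b, c, J₁ a] := by rw [hcyc, hcyc]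
    _ = -β ![b, J₁ c, a] := by
        have := hβ J₁ (by simp) b c a
        linarith
    _ = -β ![a, b, J₁ c] := by rw [hcyc b (J₁ c) a]
  -- two J's in slots 2,3 : invariance
  have hInv : ∀ a b c : V, β ![a, J₁ b, J₁ c] = β ![a, b, c] := by
    intro a b c
    have := hβ J₁ (by simp) a b (J₁ c)
    rw [h1] at this
    rw [hneg] at this
    linarith
  -- combine: compute β ![J₁ a, J₁ b, c] in two ways
  have key : ∀ a b c : V, β ![a, b, c] = 0 := by
    intro a b c
    have A : β ![J₁ a, J₁ b, c] = -β ![a, b, c] := by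
      rw [hJ1 a (J₁ b) c, hInv a b c]
    have B : β ![J₁ a, J₁ b, c] = β ![a, b, c] := by
      rw [hcyc (J₁ a) (J₁ b) c, hInv c a b, ← hcyc a b c]
    linarith
  ext v
  have hv : v = ![v 0, v 1, v 2] := by
    funext i; fin_cases i <;> rfl
  rw [hv]
  exact key _ _ _
end

section
/- Let (V, ⟨·,·⟩) be a finite-dimensional real inner product space equipped with linear endomorphisms J₁, J₂, J₃ satisfying J₁² = J₂² = J₃² = −id, J_i J_j = −J_j J_i for i ≠ j, J₁J₂ = J₃, and ⟨J_i X, J_i Y⟩ = ⟨X, Y⟩ for all X, Y. For A, B ∈ V let A∧B denote the skew-symmetric endomorphism (A∧B)(W) := ⟨A,W⟩B − ⟨B,W⟩A, and set (A∧B)^{S²E} := (1/4)(A∧B + Σ_{i=1}^{3} J_iA∧J_iB). Let X, Y, U ∈ V with Y and U both orthogonal to the subspace Span{X, J₁X, J₂X, J₃X}. Then the commutator of endomorphisms satisfies [(X∧Y)^{S²E}, (X∧U)^{S²E}] = (1/16) Σ_{i,j=0}^{3} ⟨J_iY, J_jU⟩ (J_iX ∧ J_jX) + (1/4) ⟨X,X⟩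 (Y∧U)^{S²E}, where J₀ := id. -/
open RealInnerProductSpace

/-- On a finite-dimensional real inner product space with a
quaternion-Hermitian structure, extended by `J 0 = id` (so `J 1, J 2, J 3` play the
roles of `J₁, J₂, J₃`), with `A∧B` the skew-symmetric endomorphism
`(A∧B)(W) = ⟪A,W⟫B − ⟪B,W⟫A` and `(A∧B)^{S²E} = (1/4)(A∧B + Σᵢ₌₁³ JᵢA∧JᵢB)`:
if `Y` and `U` are orthogonal to `Span{X, J₁X, J₂X, J₃X}`, then
`[(X∧Y)^{S²E}, (X∧U)^{S²E}] = (1/16)Σ_{i,j=0}^{3} ⟪JᵢY, JⱼU⟫ (JᵢX ∧ JⱼX)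
 + (1/4)⟪X,X⟫ (Y∧U)^{S²E}`. -/
theorem stmt4 {V : Type*} [NormedAddCommGroup V] [InnerProductSpace ℝ V]
    [FiniteDimensional ℝ V]
    (J : Fin 4 → V →ₗ[ℝ] V)
    (hJ0 : J 0 = LinearMap.id)
    (hJ2 : ∀ i, i ≠ 0 → ∀ v, J i (J i v) = -v)
    (hanti : ∀ i j, i ≠ 0 → j ≠ 0 → i ≠ j → ∀ v, J i (J j v) = -(J j (J i v)))
    (h123 : ∀ v, J 1 (J 2 v) = J 3 v)
    (hiso : ∀ i, i ≠ 0 → ∀ x y : V, ⟪J i x, J i y⟫ = ⟪x, y⟫)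
    (wedgeE : V → V → V → V)
    (hwedgeE : ∀ a b w, wedgeE a b w = ⟪a, w⟫ • b - ⟪b, w⟫ • a)
    (s2e : V → V → V → V)
    (hs2e : ∀ a b w, s2e a b w
      = (1/4 : ℝ) • (wedgeE a b w + ∑ i : Fin 3, wedgeE (J i.succ a) (J i.succ b) w))
    (X Y U : V)
    (hY : ∀ i, ⟪Y, J i X⟫ = 0) (hU : ∀ i, ⟪U, J i X⟫ = 0) :
    ∀ w : V,
      s2e X Y (s2e X U w) - s2e X U (s2e X Y w)
        = (1/16 : ℝ) •
            (∑ i : Fin 4, ∑ j : Fin 4, ⟪J i Y, J j U⟫ • wedgeE (J i X) (J j X) w)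
          + ((1/4 : ℝ) * ⟪X, X⟫) • s2e Y U w := by

  -- J 0 is the identity
  have j0 : ∀ v : V, J 0 v = v := by intro v; rw [hJ0]; rfl
  -- squares
  have sq1 : ∀ v, J 1 (J 1 v) = -v := hJ2 1 (by decide)
  have sq2 : ∀ v, J 2 (J 2 v) = -v := hJ2 2 (by decide)
  have sq3 : ∀ v, J 3 (J 3 v) = -v := hJ2 3 (by decide)
  -- products
  have p12 : ∀ v, J 1 (J 2 v) = J 3 v := h123
  have p21 : ∀ v, J 2 (J 1 v) = -(J 3 v) := by
    intro v
    rw [hanti 2 1 (by decide) (by decide) (by decide), h123]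
  have p23 : ∀ v, J 2 (J 3 v) = J 1 v := by
    intro v
    rw [← h123 v, hanti 2 1 (by decide) (by decide) (by decide), sq2, map_neg, neg_neg]
  have p32 : ∀ v, J 3 (J 2 v) = -(J 1 v) := by
    intro v
    rw [hanti 3 2 (by decide) (by decide) (by decide), p23]
  have p13 : ∀ v, J 1 (J 3 v) = -(J 2 v) := by
    intro v
    rw [← h123 v, sq1]
  have p31 : ∀ v, J 3 (J 1 v) = J 2 v := by
    intro v
    rw [hanti 3 1 (by decide) (by decide) (by decide), p13, neg_neg]
  -- skew-adjointness
  have skew : ∀ i, i ≠ 0 → ∀ a b : V, ⟪J i a, b⟫ = -⟪a, J i b⟫ := by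
    intro i hi a b
    calc ⟪J i a, b⟫ = ⟪J i (J i a), J i b⟫ := (hiso i hi _ _).symm
    _ = ⟪-a, J i b⟫ := by rw [hJ2 i hi]
    _ = -⟪a, J i b⟫ := by rw [inner_neg_left]
  have sk1 : ∀ a b : V, ⟪J 1 a, b⟫ = -⟪a, J 1 b⟫ := skew 1 (by decide)
  have sk2 : ∀ a b : V, ⟪J 2 a, b⟫ = -⟪a, J 2 b⟫ := skew 2 (by decide)
  have sk3 : ∀ a b : V, ⟪J 3 a, b⟫ = -⟪a, J 3 b⟫ := skew 3 (by decide)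
  -- orthogonality facts
  have hYX : ⟪Y, X⟫ = 0 := by have := hY 0; rwa [j0] at this
  have hUX : ⟪U, X⟫ = 0 := by have := hU 0; rwa [j0] at this
  have hXY0 : ⟪X, Y⟫ = 0 := by rw [real_inner_comm]; exact hYX
  have hXU0 : ⟪X, U⟫ = 0 := by rw [real_inner_comm]; exact hUX
  have hXY : ∀ k, k ≠ 0 → ⟪X, J k Y⟫ = 0 := by
    intro k hk
    have h1 : ⟪J k X, Y⟫ = -⟪X, J k Y⟫ := skew k hk X Y
    have h2 : ⟪J k X, Y⟫ = 0 := by rw [real_inner_comm]; exact hY k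
    linarith
  have hXU : ∀ k, k ≠ 0 → ⟪X, J k U⟫ = 0 := by
    intro k hk
    have h1 : ⟪J k X, U⟫ = -⟪X, J k U⟫ := skew k hk X U
    have h2 : ⟪J k X, U⟫ = 0 := by rw [real_inner_comm]; exact hU k
    linarith
  have hXY1 : ⟪X, J 1 Y⟫ = 0 := hXY 1 (by decide)
  have hXY2 : ⟪X, J 2 Y⟫ = 0 := hXY 2 (by decide)
  have hXY3 : ⟪X, J 3 Y⟫ = 0 := hXY 3 (by decide)
  have hXU1 : ⟪X, J 1 U⟫ = 0 := hXU 1 (by decide)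
  have hXU2 : ⟪X, J 2 U⟫ = 0 := hXU 2 (by decide)
  have hXU3 : ⟪X, J 3 U⟫ = 0 := hXU 3 (by decide)
  have hXX : ∀ k, k ≠ 0 → ⟪X, J k X⟫ = 0 := by
    intro k hk
    have h1 : ⟪J k X, X⟫ = -⟪X, J k X⟫ := skew k hk X X
    have h2 : ⟪J k X, X⟫ = ⟪X, J k X⟫ := real_inner_comm _ _
    linarith
  have hXX1 : ⟪X, J 1 X⟫ = 0 := hXX 1 (by decide)
  have hXX2 : ⟪X, J 2 X⟫ = 0 := hXX 2 (by decide)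
  have hXX3 : ⟪X, J 3 X⟫ = 0 := hXX 3 (by decide)
  -- orientation normalisation for U-Y inner products
  have hUY : ∀ k, k ≠ 0 → ⟪U, J k Y⟫ = -⟪Y, J k U⟫ := by
    intro k hk
    have h1 : ⟪J k Y, U⟫ = -⟪Y, J k U⟫ := skew k hk Y U
    have h2 : ⟪U, J k Y⟫ = ⟪J k Y, U⟫ := real_inner_comm _ _
    linarith
  have hUY1 : ⟪U, J 1 Y⟫ = -⟪Y, J 1 U⟫ := hUY 1 (by decide)
  have hUY2 : ⟪U, J 2 Y⟫ = -⟪Y, J 2 U⟫ := hUY 2 (by decide)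
  have hUY3 : ⟪U, J 3 Y⟫ = -⟪Y, J 3 U⟫ := hUY 3 (by decide)
  have hUY0 : ⟪U, Y⟫ = ⟪Y, U⟫ := real_inner_comm _ _
  have hYJX : ∀ k, ⟪Y, J k X⟫ = 0 := hY
  have hUJX : ∀ k, ⟪U, J k X⟫ = 0 := hU
  -- index normalisation
  have s0 : (0 : Fin 3).succ = (1 : Fin 4) := rfl
  have s1 : (1 : Fin 3).succ = (2 : Fin 4) := rfl
  have s2 : (2 : Fin 3).succ = (3 : Fin 4) := rfl
  intro w
  simp only [hs2e, hwedgeE, Fin.sum_univ_three, Fin.sum_univ_four, s0, s1, s2, j0,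
    map_add, map_sub, map_smul, map_neg,
    inner_add_right, inner_sub_right, inner_neg_right, real_inner_smul_right,
    inner_add_left, inner_sub_left, inner_neg_left, real_inner_smul_left,
    sq1, sq2, sq3, p12, p21, p23, p32, p31, p13,
    sk1, sk2, sk3,
    hYX, hUX, hXY0, hXU0, hXY1, hXY2, hXY3, hXU1, hXU2, hXU3,
    hXX1, hXX2, hXX3, hUY1, hUY2, hUY3, hUY0, hYJX, hUJX,
    smul_add, smul_sub, smul_neg, neg_neg, neg_zero, zero_smul, smul_zero,
    mul_zero, zero_mul, add_zero, zero_add, sub_zero, zero_sub, mul_neg, neg_mul]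
  module
end

section
/- Let (V, ⟨·,·⟩) be a real inner product space of dimension 4n (n ≥ 1) equipped with linear endomorphisms J₁, J₂, J₃ satisfying J₁² = J₂² = J₃² = −id, J_i J_j = −J_j J_i for i ≠ j, J₁J₂ = J₃, and ⟨J_i X, J_i Y⟩ = ⟨X, Y⟩ for all X, Y; set ω_i(U,W) := ⟨J_iU, W⟩. Fix ν ∈ ℝ and X, Y ∈ V, and consider the alternating 2-form R(X,Y) := −(ν/4)(X∧Y + Σ_{i=1}^{3} J_iX∧J_iY + 2 Σ_{i=1}^{3} ω_i(X,Y) ω_i). Then the orthogonal projection of R(X,Y) onto the linear span of {ω₁, ω₂, ω₃}, taken with respect to the inner product ⟨α,β⟩ := (1/2) Σ_{a,b} α(e_a,e_b)β(e_a,e_b) for an orthonormal basis (e_a) of V, equals −(ν/2) Σ_{i=1}^{3} ω_i(X,Y) ω_i. -/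
open RealInnerProductSpace

/-- On a real inner product space of dimension `4n` (`n ≥ 1`) with a
quaternion-Hermitian structure `J 0, J 1, J 2` (playing the roles of `J₁, J₂, J₃`) and
fundamental 2-forms `ω i (U,W) = ⟪J i U, W⟫`, fix `ν ∈ ℝ`, `X, Y ∈ V` and consider the
2-form `R(X,Y) = −(ν/4)(X∧Y + Σᵢ JᵢX∧JᵢY + 2Σᵢ ωᵢ(X,Y)ωᵢ)`. Then the orthogonal
projection of `R(X,Y)` onto the span of `{ω₁, ω₂, ω₃}` (w.r.t. the inner product
`⟨α,β⟩ = (1/2)Σ_{a,b} α(e_a,e_b)β(e_a,e_b)` for an orthonormal basis `e`) equals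
`q := −(ν/2) Σᵢ ωᵢ(X,Y) ωᵢ`; i.e. `q` lies in the span of the `ωᵢ` (first conjunct)
and `R(X,Y) − q` is orthogonal to each `ω k` (second conjunct). -/
theorem stmt9 {V : Type*} [NormedAddCommGroup V] [InnerProductSpace ℝ V]
    [FiniteDimensional ℝ V]
    (n : ℕ) (hn : 1 ≤ n) (hdim : Module.finrank ℝ V = 4 * n)
    (J : Fin 3 → V →ₗ[ℝ] V)
    (hJ2 : ∀ i, ∀ v, J i (J i v) = -v)
    (hanti : ∀ i j, i ≠ j → ∀ v, J i (J j v) = -(J j (J i v)))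
    (h12 : ∀ v, J 0 (J 1 v) = J 2 v)
    (hiso : ∀ i, ∀ x y : V, ⟪J i x, J i y⟫ = ⟪x, y⟫)
    (ω : Fin 3 → V → V → ℝ) (hω : ∀ i u w, ω i u w = ⟪J i u, w⟫)
    {ι : Type*} [Fintype ι] (e : OrthonormalBasis ι ℝ V)
    (wedge : V → V → V → V → ℝ)
    (hwedge : ∀ a b u w, wedge a b u w = ⟪a, u⟫ * ⟪b, w⟫ - ⟪a, w⟫ * ⟪b, u⟫)
    (ν : ℝ) (X Y : V)
    (R : V → V → ℝ)
    (hR : ∀ u w, R u w = -(ν/4) * (wedge X Y u w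
      + ∑ i, wedge (J i X) (J i Y) u w + 2 * ∑ i, ω i X Y * ω i u w))
    (q : V → V → ℝ)
    (hq : ∀ u w, q u w = -(ν/2) * ∑ i, ω i X Y * ω i u w) :
    (∃ c : Fin 3 → ℝ, ∀ u w, q u w = ∑ i, c i * ω i u w) ∧
    (∀ k : Fin 3,
      (1/2) * ∑ a, ∑ b, (R (e a) (e b) - q (e a) (e b)) * ω k (e a) (e b) = 0) := by
  have skew : ∀ i (x y : V), ⟪J i x, y⟫ = -⟪x, J i y⟫ := by
    intro i x y
    have h := hiso i x (J i y)
    rw [hJ2, inner_neg_right] at h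
    linarith
  constructor
  · exact ⟨fun i => -(ν/2) * ω i X Y, fun u w => by
      rw [hq, Finset.mul_sum]; exact Finset.sum_congr rfl fun i _ => by ring⟩
  · intro k
    have parse : ∀ v w : V, ∑ a, ⟪v, e a⟫ * ⟪w, e a⟫ = ⟪v, w⟫ := by
      intro v w
      have := e.sum_inner_mul_inner v w
      simpa [real_inner_comm] using this
    have key : ∀ A B : V,
        ∑ a, ∑ b, wedge A B (e a) (e b) * ω k (e a) (e b) = 2 * ⟪J k A, B⟫ := by
      intro A B
      have hinner : ∀ a : ι,
          ∑ b, wedge A B (e a) (e b) * ω k (e a) (e b)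
            = ⟪A, e a⟫ * ⟪B, J k (e a)⟫ - ⟪B, e a⟫ * ⟪A, J k (e a)⟫ := by
        intro a
        have h1 : ∑ b, ⟪B, e b⟫ * ⟪J k (e a), e b⟫ = ⟪B, J k (e a)⟫ := by
          have := parse B (J k (e a)); simpa [real_inner_comm] using this
        have h2 : ∑ b, ⟪A, e b⟫ * ⟪J k (e a), e b⟫ = ⟪A, J k (e a)⟫ := by
          have := parse A (J k (e a)); simpa [real_inner_comm] using this
        calc ∑ b, wedge A B (e a) (e b) * ω k (e a) (e b)
            = ∑ b, (⟪A, e a⟫ * (⟪B, e b⟫ * ⟪J k (e a), e b⟫)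
                - ⟪B, e a⟫ * (⟪A, e b⟫ * ⟪J k (e a), e b⟫)) := by
              refine Finset.sum_congr rfl fun b _ => ?_
              rw [hwedge, hω]; ring
          _ = ⟪A, e a⟫ * ⟪B, J k (e a)⟫ - ⟪B, e a⟫ * ⟪A, J k (e a)⟫ := by
              rw [Finset.sum_sub_distrib, ← Finset.mul_sum, ← Finset.mul_sum, h1, h2]
      calc ∑ a, ∑ b, wedge A B (e a) (e b) * ω k (e a) (e b)
          = ∑ a, (⟪A, e a⟫ * ⟪J k B, e a⟫ * (-1) - ⟪B, e a⟫ * ⟪J k A, e a⟫ * (-1)) := by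
            refine Finset.sum_congr rfl fun a _ => ?_
            rw [hinner a]
            have hA : ⟪A, J k (e a)⟫ = -⟪J k A, e a⟫ := by
              rw [real_inner_comm, skew, real_inner_comm]
            have hB : ⟪B, J k (e a)⟫ = -⟪J k B, e a⟫ := by
              rw [real_inner_comm, skew, real_inner_comm]
            rw [hA, hB]; ring
        _ = 2 * ⟪J k A, B⟫ := by
            rw [Finset.sum_sub_distrib, ← Finset.sum_mul, ← Finset.sum_mul,
              parse A (J k B), parse B (J k A)]
            have h3 : ⟪A, J k B⟫ = -⟪J k A, B⟫ := by
              calc ⟪A, J k B⟫ = ⟪J k B, A⟫ := real_inner_comm _ _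
                _ = -⟪B, J k A⟫ := skew k B A
                _ = -⟪J k A, B⟫ := by rw [real_inner_comm]
            have h4 : ⟪B, J k A⟫ = ⟪J k A, B⟫ := real_inner_comm _ _
            rw [h3, h4]; ring
    have hmix : ∑ i, ⟪J k (J i X), J i Y⟫ = -⟪J k X, Y⟫ := by
      have hterm : ∀ i : Fin 3, ⟪J k (J i X), J i Y⟫
          = (if i = k then 2 * ⟪J k X, Y⟫ else 0) + -⟪J k X, Y⟫ := by
        intro i
        by_cases h : i = k
        · subst h; rw [if_pos rfl, hJ2, inner_neg_left, skew]; ring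
        · rw [if_neg h, hanti k i (fun hh => h hh.symm), inner_neg_left, hiso i]; ring
      rw [Finset.sum_congr rfl fun i _ => hterm i, Finset.sum_add_distrib,
        Finset.sum_ite_eq' Finset.univ k fun _ => 2 * ⟪J k X, Y⟫]
      simp only [Finset.mem_univ, if_true, Finset.sum_const, Finset.card_univ,
        Fintype.card_fin, nsmul_eq_mul]
      ring
    have hpt : ∀ a b : ι, (R (e a) (e b) - q (e a) (e b)) * ω k (e a) (e b)
        = -(ν/4) * (wedge X Y (e a) (e b) * ω k (e a) (e b))
          + ∑ i, -(ν/4) * (wedge (J i X) (J i Y) (e a) (e b) * ω k (e a) (e b)) := by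
      intro a b
      rw [hR, hq]
      have h1 : ∑ i, -(ν/4) * (wedge (J i X) (J i Y) (e a) (e b) * ω k (e a) (e b))
          = -(ν/4) * ((∑ i, wedge (J i X) (J i Y) (e a) (e b)) * ω k (e a) (e b)) := by
        rw [Finset.sum_mul, Finset.mul_sum]
      rw [h1]; ring
    have main : ∑ a, ∑ b, (R (e a) (e b) - q (e a) (e b)) * ω k (e a) (e b)
        = -(ν/4) * ((∑ a, ∑ b, wedge X Y (e a) (e b) * ω k (e a) (e b))
          + ∑ i, ∑ a, ∑ b, wedge (J i X) (J i Y) (e a) (e b) * ω k (e a) (e b)) := by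
      calc ∑ a, ∑ b, (R (e a) (e b) - q (e a) (e b)) * ω k (e a) (e b)
          = ∑ a, ∑ b, (-(ν/4) * (wedge X Y (e a) (e b) * ω k (e a) (e b))
              + ∑ i, -(ν/4) * (wedge (J i X) (J i Y) (e a) (e b) * ω k (e a) (e b))) := by
            exact Finset.sum_congr rfl fun a _ => Finset.sum_congr rfl fun b _ => hpt a b
        _ = (∑ a, ∑ b, -(ν/4) * (wedge X Y (e a) (e b) * ω k (e a) (e b)))
            + ∑ a, ∑ b, ∑ i, -(ν/4) * (wedge (J i X) (J i Y) (e a) (e b) * ω k (e a) (e b)) := by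
            simp [Finset.sum_add_distrib]
        _ = -(ν/4) * (∑ a, ∑ b, wedge X Y (e a) (e b) * ω k (e a) (e b))
            + ∑ i, -(ν/4) * (∑ a, ∑ b, wedge (J i X) (J i Y) (e a) (e b) * ω k (e a) (e b)) := by
            congr 1
            · rw [Finset.mul_sum]
              exact Finset.sum_congr rfl fun a _ => by rw [Finset.mul_sum]
            · rw [Finset.sum_congr rfl fun a (_ : a ∈ Finset.univ) =>
                (Finset.sum_comm : ∑ b : ι, ∑ i : Fin 3, _ = _), Finset.sum_comm]
              exact Finset.sum_congr rfl fun i _ => by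
                rw [Finset.mul_sum]
                exact Finset.sum_congr rfl fun a _ => by rw [Finset.mul_sum]
        _ = -(ν/4) * ((∑ a, ∑ b, wedge X Y (e a) (e b) * ω k (e a) (e b))
            + ∑ i, ∑ a, ∑ b, wedge (J i X) (J i Y) (e a) (e b) * ω k (e a) (e b)) := by
            rw [mul_add]; congr 1; rw [Finset.mul_sum]
    rw [main, key X Y]
    have hT : ∑ i, ∑ a, ∑ b, wedge (J i X) (J i Y) (e a) (e b) * ω k (e a) (e b)
        = 2 * -⟪J k X, Y⟫ := by
      rw [Finset.sum_congr rfl fun i _ => key (J i X) (J i Y), ← Finset.mul_sum, hmix]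
    rw [hT]; ring
end
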